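/- Let all preferences in P be substitutable and let μ and μ̃ be stable matchings with μ ⪰_F μ̃. Then, for any matching μ': μ' is stable under P with μ ⪰_F μ' ⪰_F μ̃ if and only if μ' is stable under the reduced preference profile P^{μ,μ̃}. -/
import Mathlib


open Finset

noncomputable section

open scoped Classical

/-- `C` is a choice function: `C S ⊆ S` for every `S`. -/
def IsChoiceFun {α : Type*} (C : Finset α → Finset α) : Prop := ∀ S, C S ⊆ S

/-- Substitutability of a choice function: if `b` is chosen from `S`, then `b` is chosen
from `S' ∪ {b}` for every `S' ⊆ S`. -/
def Substitutable {α : Type*} [DecidableEq α] (C : Finset α → Finset α) : Prop :=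
  ∀ (S S' : Finset α) (b : α), S' ⊆ S → b ∈ C S → b ∈ C (insert b S')

/-- The law of aggregate demand for a choice function. -/
def LAD {α : Type*} (C : Finset α → Finset α) : Prop :=
  ∀ S' S : Finset α, S' ⊆ S → (C S').card ≤ (C S).card

/-- The most `u`-preferred subset of `S` among the members of the family `A` of acceptable
sets (the empty set is always available as a fallback). -/
def bestIn {α : Type*} (u : Finset α → ℕ) (A : Set (Finset α)) (S : Finset α) : Finset α := by
  classical
  have h : ∃ T ∈ (S.powerset).filter (fun T => T ∈ A ∨ T = ∅),
      ∀ T' ∈ (S.powerset).filter (fun T => T ∈ A ∨ T = ∅), u T' ≤ u T :=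
    Finset.exists_max_image _ u ⟨∅, by simp⟩
  exact h.choose

/-- A many-to-many matching market: each firm `f` has a strict preference over subsets
of workers, represented by an injective utility `uF f`, and symmetrically for workers. -/
structure Market (F W : Type*) where
  uF : F → Finset W → ℕ
  uW : W → Finset F → ℕ
  injF : ∀ f, Function.Injective (uF f)
  injW : ∀ w, Function.Injective (uW w)

/-- A many-to-many matching. -/
structure Matching (F W : Type*) where
  fm : F → Finset W
  wm : W → Finset F
  consistent : ∀ f w, w ∈ fm f ↔ f ∈ wm w

namespace Market

variable {F W : Type*} [DecidableEq F] [DecidableEq W]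

/-- The choice set of firm `f` under the original preference: the most preferred
subset among the acceptable subsets (those strictly preferred to `∅`). -/
def Cf (M : Market F W) (f : F) : Finset W → Finset W :=
  bestIn (M.uF f) {T | M.uF f ∅ < M.uF f T}

/-- The choice set of worker `w` under the original preference. -/
def Cw (M : Market F W) (w : W) : Finset F → Finset F :=
  bestIn (M.uW w) {T | M.uW w ∅ < M.uW w T}

/-- Individual rationality under the original profile. -/
def IR (M : Market F W) (μ : Matching F W) : Prop :=
  (∀ f, M.Cf f (μ.fm f) = μ.fm f) ∧ (∀ w, M.Cw w (μ.wm w) = μ.wm w)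

/-- `(f,w)` blocks `μ` under the original profile. -/
def Blocks (M : Market F W) (μ : Matching F W) (f : F) (w : W) : Prop :=
  w ∉ μ.fm f ∧ w ∈ M.Cf f (insert w (μ.fm f)) ∧ f ∈ M.Cw w (insert f (μ.wm w))

/-- Stability under the original profile. -/
def Stable (M : Market F W) (μ : Matching F W) : Prop :=
  M.IR μ ∧ ∀ f w, ¬ M.Blocks μ f w

/-- Blair's partial order for firm `f`: `S ⪰_f S'` iff `C_f (S ∪ S') = S`. -/
def blairF (M : Market F W) (f : F) (S S' : Finset W) : Prop := M.Cf f (S ∪ S') = S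

/-- Blair's partial order for worker `w`. -/
def blairW (M : Market F W) (w : W) (S S' : Finset F) : Prop := M.Cw w (S ∪ S') = S

/-- The unanimous Blair order for the firms' side: `μ ⪰_F μ'`. -/
def geF (M : Market F W) (μ μ' : Matching F W) : Prop := ∀ f, M.blairF f (μ.fm f) (μ'.fm f)

/-- The unanimous Blair order for the workers' side: `μ ⪰_W μ'`. -/
def geW (M : Market F W) (μ μ' : Matching F W) : Prop := ∀ w, M.blairW w (μ.wm w) (μ'.wm w)

/-- Strict unanimous Blair order for the firms' side: `μ ≻_F μ'`. -/
def gtF (M : Market F W) (μ μ' : Matching F W) : Prop := M.geF μ μ' ∧ μ ≠ μ'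

/-- Workers deleted from `f`'s list in Step 1(a) of the reduction procedure:
those belonging to some `W' ≻_f μ(f)` but not to `μ(f)`. -/
def D1 (M : Market F W) (μ : Matching F W) (f : F) : Set W :=
  {x | ∃ W' : Finset W, (M.Cf f (W' ∪ μ.fm f) = W' ∧ W' ≠ μ.fm f) ∧ x ∈ W' ∧ x ∉ μ.fm f}

/-- Workers deleted from `f`'s list in Step 2(a): those belonging to some `W'` with
`μ̃(f) ≻_f W'` but not to `μ̃(f)`. -/
def D2 (M : Market F W) (μt : Matching F W) (f : F) : Set W :=
  {x | ∃ W' : Finset W, (M.Cf f (μt.fm f ∪ W') = μt.fm f ∧ μt.fm f ≠ W') ∧ x ∈ W' ∧ x ∉ μt.fm f}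

/-- Firms deleted from `w`'s list in Step 1(b). -/
def E1 (M : Market F W) (μt : Matching F W) (w : W) : Set F :=
  {x | ∃ F' : Finset F, (M.Cw w (F' ∪ μt.wm w) = F' ∧ F' ≠ μt.wm w) ∧ x ∈ F' ∧ x ∉ μt.wm w}

/-- Firms deleted from `w`'s list in Step 2(b). -/
def E2 (M : Market F W) (μ : Matching F W) (w : W) : Set F :=
  {x | ∃ F' : Finset F, (M.Cw w (μ.wm w ∪ F') = μ.wm w ∧ μ.wm w ≠ F') ∧ x ∈ F' ∧ x ∉ μ.wm w}

/-- Workers deleted from `f`'s list in Step 3: those workers `w` for which `{f}` is no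
longer on `w`'s list after Steps 1 and 2 (either `{f}` was never acceptable to `w`, or
`f` was deleted from `w`'s list in Step 1(b) or 2(b)). -/
def D3 (M : Market F W) (μ μt : Matching F W) (f : F) : Set W :=
  {w | ¬ (M.uW w ∅ < M.uW w {f}) ∨ f ∈ M.E1 μt w ∪ M.E2 μ w}

/-- Firms deleted from `w`'s list in Step 3. -/
def E3 (M : Market F W) (μ μt : Matching F W) (w : W) : Set F :=
  {f | ¬ (M.uF f ∅ < M.uF f {w}) ∨ w ∈ M.D1 μ f ∪ M.D2 μt f}

/-- All workers deleted from `f`'s list in the reduction procedure. -/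
def Dall (M : Market F W) (μ μt : Matching F W) (f : F) : Set W :=
  M.D1 μ f ∪ M.D2 μt f ∪ M.D3 μ μt f

/-- All firms deleted from `w`'s list in the reduction procedure. -/
def Eall (M : Market F W) (μ μt : Matching F W) (w : W) : Set F :=
  M.E1 μt w ∪ M.E2 μ w ∪ M.E3 μ μt w

/-- The family of sets surviving in `f`'s list under the reduced profile `P^{μ,μ̃}`:
originally acceptable sets containing no deleted worker. -/
def RAf (M : Market F W) (μ μt : Matching F W) (f : F) : Set (Finset W) :=
  {T | M.uF f ∅ < M.uF f T ∧ ∀ x ∈ T, x ∉ M.Dall μ μt f}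

/-- The family of sets surviving in `w`'s list under the reduced profile `P^{μ,μ̃}`. -/
def RAw (M : Market F W) (μ μt : Matching F W) (w : W) : Set (Finset F) :=
  {T | M.uW w ∅ < M.uW w T ∧ ∀ x ∈ T, x ∉ M.Eall μ μt w}

/-- The choice set `C^{μ,μ̃}_f` of firm `f` under the reduced profile. -/
def Cfred (M : Market F W) (μ μt : Matching F W) (f : F) : Finset W → Finset W :=
  bestIn (M.uF f) (M.RAf μ μt f)

/-- The choice set `C^{μ,μ̃}_w` of worker `w` under the reduced profile. -/
def Cwred (M : Market F W) (μ μt : Matching F W) (w : W) : Finset F → Finset F :=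
  bestIn (M.uW w) (M.RAw μ μt w)

/-- Individual rationality under the reduced profile `P^{μ,μ̃}`. -/
def IRred (M : Market F W) (μ μt ν : Matching F W) : Prop :=
  (∀ f, M.Cfred μ μt f (ν.fm f) = ν.fm f) ∧ (∀ w, M.Cwred μ μt w (ν.wm w) = ν.wm w)

/-- Blocking under the reduced profile `P^{μ,μ̃}`. -/
def Blocksred (M : Market F W) (μ μt ν : Matching F W) (f : F) (w : W) : Prop :=
  w ∉ ν.fm f ∧ w ∈ M.Cfred μ μt f (insert w (ν.fm f)) ∧
    f ∈ M.Cwred μ μt w (insert f (ν.wm w))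

/-- Stability under the reduced profile `P^{μ,μ̃}`. -/
def Stablered (M : Market F W) (μ μt ν : Matching F W) : Prop :=
  M.IRred μ μt ν ∧ ∀ f w, ¬ M.Blocksred μ μt ν f w

/-- The unanimous Blair order on the firms' side computed with the reduced choice sets. -/
def geFred (M : Market F W) (μ μt ν ν' : Matching F W) : Prop :=
  ∀ f, M.Cfred μ μt f (ν.fm f ∪ ν'.fm f) = ν.fm f

/-- The unanimous Blair order on the workers' side computed with the reduced choice sets. -/
def geWred (M : Market F W) (μ μt ν ν' : Matching F W) : Prop :=
  ∀ w, M.Cwred μ μt w (ν.wm w ∪ ν'.wm w) = ν.wm w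

/-- All preferences in the market are substitutable. -/
def SubstAll (M : Market F W) : Prop :=
  (∀ f, Substitutable (M.Cf f)) ∧ (∀ w, Substitutable (M.Cw w))

/-- All preferences in the market satisfy the law of aggregate demand. -/
def LADAll (M : Market F W) : Prop :=
  (∀ f, LAD (M.Cf f)) ∧ (∀ w, LAD (M.Cw w))

/-- A cycle for the reduced profile `P^{μ,μ̃}`: an `r`-periodic sequence of worker-firm
pairs `(w_i, f_i)` (indexed cyclically) such that (i) `w_i ∈ μ(f_i) \ μ̃(f_i)`;
(ii) `C^{μ,μ̃}_{f_i}(W \ {w_i}) = (μ(f_i) \ {w_i}) ∪ {w_{i+1}}`; and (iii)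
`C^{μ,μ̃}_{w_{i+1}}(μ(w_{i+1}) ∪ {f_i}) = (μ(w_{i+1}) \ {f_{i+1}}) ∪ {f_i}`. -/
def IsCycle [Fintype W] (M : Market F W) (μ μt : Matching F W) (r : ℕ)
    (w : ℕ → W) (f : ℕ → F) : Prop :=
  0 < r ∧ (∀ i, w (i + r) = w i) ∧ (∀ i, f (i + r) = f i) ∧
  ∀ i, (w i ∈ μ.fm (f i) ∧ w i ∉ μt.fm (f i)) ∧
    M.Cfred μ μt (f i) (Finset.univ \ {w i}) = insert (w (i + 1)) (μ.fm (f i) \ {w i}) ∧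
    M.Cwred μ μt (w (i + 1)) (μ.wm (w (i + 1)) ∪ {f i}) =
      insert (f i) (μ.wm (w (i + 1)) \ {f (i + 1)})

/-- The firm-side assignment of the cyclic matching `μ_σ` obtained from the cycle
`σ = (w, f)` of length `r`. -/
def cyclicFm (μ : Matching F W) (r : ℕ) (w : ℕ → W) (f : ℕ → F) (g : F) : Finset W :=
  if ∃ i ∈ Finset.range r, f i = g then
    (μ.fm g \ ((Finset.range r).filter (fun i => f i = g)).image w) ∪
      ((Finset.range r).filter (fun i => f i = g)).image (fun i => w (i + 1))
  else μ.fm g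

/-- `ν` is a cyclic matching under the reduced profile `P^{μ,μ̃}`: `ν = μ_σ` for some
cycle `σ` for `P^{μ,μ̃}` (the worker side of `ν` is determined by consistency). -/
def IsCyclicMatching [Fintype W] (M : Market F W) (μ μt ν : Matching F W) : Prop :=
  ∃ (r : ℕ) (w : ℕ → W) (f : ℕ → F),
    M.IsCycle μ μt r w f ∧ ∀ g, ν.fm g = cyclicFm μ r w f g

end Market


section SpecLemma

lemma bestIn_spec {α : Type*} (u : Finset α → ℕ) (A : Set (Finset α)) (S : Finset α) :
    (bestIn u A S ⊆ S ∧ (bestIn u A S ∈ A ∨ bestIn u A S = ∅)) ∧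
      ∀ T ⊆ S, (T ∈ A ∨ T = ∅) → u T ≤ u (bestIn u A S) := by
  have h : ∃ T ∈ (S.powerset).filter (fun T => T ∈ A ∨ T = ∅),
      ∀ T' ∈ (S.powerset).filter (fun T => T ∈ A ∨ T = ∅), u T' ≤ u T :=
    Finset.exists_max_image _ u ⟨∅, by simp⟩
  have hb : bestIn u A S = h.choose := rfl
  obtain ⟨h1, h2⟩ := h.choose_spec
  rw [Finset.mem_filter, Finset.mem_powerset] at h1
  refine ⟨by rw [hb]; exact h1, ?_⟩
  intro T hTS hTA
  rw [hb]
  exact h2 T (by rw [Finset.mem_filter, Finset.mem_powerset]; exact ⟨hTS, hTA⟩)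

end SpecLemma

section ChoiceLemmas

variable {α : Type*} {u : Finset α → ℕ} {A : Set (Finset α)}

lemma bestIn_subset (S : Finset α) : bestIn u A S ⊆ S := (bestIn_spec u A S).1.1

lemma bestIn_acc (S : Finset α) : bestIn u A S ∈ A ∨ bestIn u A S = ∅ := (bestIn_spec u A S).1.2

lemma bestIn_le {S T : Finset α} (hTS : T ⊆ S) (hTA : T ∈ A ∨ T = ∅) :
    u T ≤ u (bestIn u A S) := (bestIn_spec u A S).2 T hTS hTA

lemma bestIn_eq_of (hinj : Function.Injective u) {S T : Finset α}
    (hTS : T ⊆ S) (hTA : T ∈ A ∨ T = ∅)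
    (hmax : ∀ T' ⊆ S, (T' ∈ A ∨ T' = ∅) → u T' ≤ u T) :
    bestIn u A S = T :=
  hinj (le_antisymm (hmax _ (bestIn_subset S) (bestIn_acc S)) (bestIn_le hTS hTA))

lemma bestIn_IIA (hinj : Function.Injective u) {S S' : Finset α}
    (h1 : bestIn u A S ⊆ S') (h2 : S' ⊆ S) : bestIn u A S' = bestIn u A S :=
  bestIn_eq_of hinj h1 (bestIn_acc S)
    (fun _ hT' hA' => bestIn_le (hT'.trans h2) hA')

lemma bestIn_filter_eq (hinj : Function.Injective u) (D : Set α) (S : Finset α) :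
    bestIn u {T | T ∈ A ∧ ∀ x ∈ T, x ∉ D} S
      = bestIn u A (S.filter fun x => x ∉ D) := by
  set A' : Set (Finset α) := {T | T ∈ A ∧ ∀ x ∈ T, x ∉ D} with hA'
  have hmemD : ∀ x ∈ bestIn u A' S, x ∉ D := by
    intro x hx
    rcases bestIn_acc (u := u) (A := A') S with hA | hE
    · exact hA.2 x hx
    · rw [hE] at hx; exact absurd hx (Finset.notMem_empty x)
  refine (bestIn_eq_of (u := u) (A := A) hinj ?_ ?_ ?_).symm
  · intro x hx
    exact Finset.mem_filter.mpr ⟨bestIn_subset S hx, hmemD x hx⟩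
  · rcases bestIn_acc (u := u) (A := A') S with hA | hE
    · exact Or.inl hA.1
    · exact Or.inr hE
  · intro T' hT' hA2
    refine bestIn_le (A := A') (fun x hx => (Finset.mem_filter.mp (hT' hx)).1) ?_
    rcases hA2 with hA2 | hE
    · exact Or.inl ⟨hA2, fun x hx => (Finset.mem_filter.mp (hT' hx)).2⟩
    · exact Or.inr hE

end ChoiceLemmas

section SubstLemmas

variable {α : Type*} [DecidableEq α] {u : Finset α → ℕ} {A : Set (Finset α)}

/-- Path independence consequence of substitutability. -/
lemma bestIn_PI (hinj : Function.Injective u) (hs : Substitutable (bestIn u A))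
    (S T : Finset α) :
    bestIn u A (bestIn u A S ∪ T) = bestIn u A (S ∪ T) := by
  refine bestIn_IIA hinj ?_ (Finset.union_subset_union (bestIn_subset S) (Finset.Subset.refl T))
  intro b hb
  by_cases hbT : b ∈ T
  · exact Finset.mem_union_right _ hbT
  · have hbS : b ∈ S := by
      rcases Finset.mem_union.mp (bestIn_subset _ hb) with h | h
      · exact h
      · exact absurd h hbT
    have := hs (S ∪ T) S b Finset.subset_union_left hb
    rw [Finset.insert_eq_self.mpr hbS] at this
    exact Finset.mem_union_left _ this

lemma bestIn_chosen_of_order (hs : Substitutable (bestIn u A)) {X B : Finset α}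
    (h : bestIn u A (X ∪ B) = X) {x : α} (hx : x ∈ X) :
    x ∈ bestIn u A (insert x B) :=
  hs (X ∪ B) B x Finset.subset_union_right (h.symm ▸ hx)

lemma bestIn_PIT (hinj : Function.Injective u) (hs : Substitutable (bestIn u A))
    {X B : Finset α} (h : bestIn u A (X ∪ B) = X) {x : α}
    (hx : x ∈ bestIn u A (insert x X)) : x ∈ bestIn u A (insert x B) := by
  have key : bestIn u A (insert x (X ∪ B)) = bestIn u A (insert x X) := by
    have h1 := bestIn_PI hinj hs (X ∪ B) {x}
    rw [h, Finset.union_comm X {x}, Finset.union_comm (X ∪ B) {x},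
      ← Finset.insert_eq, ← Finset.insert_eq] at h1
    exact h1.symm
  rw [← key] at hx
  exact hs _ B x (Finset.subset_union_right.trans (Finset.subset_insert _ _)) hx

lemma bestIn_rej (hinj : Function.Injective u) {X W' : Finset α}
    (h : bestIn u A (X ∪ W') = X) {w : α} (hw : w ∈ W') :
    bestIn u A (insert w X) = X := by
  have := bestIn_IIA (u := u) (A := A) hinj (S := X ∪ W') (S' := insert w X)
    (by rw [h]; exact Finset.subset_insert _ _)
    (Finset.insert_subset (Finset.mem_union_right _ hw) Finset.subset_union_left)
  rw [h] at this; exact this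

lemma bestIn_single (hs : Substitutable (bestIn u A)) {S : Finset α} {x : α}
    (hx : x ∈ bestIn u A S) : bestIn u A {x} = {x} ∧ {x} ∈ A := by
  have h0 : x ∈ bestIn u A (insert x ∅) := hs S ∅ x (Finset.empty_subset _) hx
  have h1 : x ∈ bestIn u A {x} := by simpa using h0
  have he : bestIn u A {x} = {x} :=
    Finset.Subset.antisymm (bestIn_subset _) (Finset.singleton_subset_iff.mpr h1)
  refine ⟨he, ?_⟩
  rcases bestIn_acc (u := u) (A := A) {x} with hA | hE
  · rwa [he] at hA
  · rw [hE] at he; exact absurd he.symm (Finset.singleton_ne_empty x)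

lemma bestIn_gen (hinj : Function.Injective u) {X : Finset α} {x : α} :
    bestIn u A (bestIn u A (insert x X) ∪ X) = bestIn u A (insert x X) :=
  bestIn_IIA hinj Finset.subset_union_left
    (Finset.union_subset (bestIn_subset _) (Finset.subset_insert _ _))

end SubstLemmas

namespace Market

variable {F W : Type*} [DecidableEq F] [DecidableEq W] {M : Market F W}

lemma Cfred_filter (M : Market F W) (μ μt : Matching F W) (f : F) (S : Finset W) :
    M.Cfred μ μt f S = M.Cf f (S.filter fun x => x ∉ M.Dall μ μt f) :=
  bestIn_filter_eq (A := {T | M.uF f ∅ < M.uF f T}) (M.injF f) (M.Dall μ μt f) S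

lemma Cwred_filter (M : Market F W) (μ μt : Matching F W) (w : W) (S : Finset F) :
    M.Cwred μ μt w S = M.Cw w (S.filter fun x => x ∉ M.Eall μ μt w) :=
  bestIn_filter_eq (A := {T | M.uW w ∅ < M.uW w T}) (M.injW w) (M.Eall μ μt w) S

/-- Polarization of interests: if `μ ⪰_F μ'` for a stable `μ'`, then `μ' ⪰_W μ`. -/
lemma polarization (hsub : M.SubstAll) {μ μ' : Matching F W} (hμ' : M.Stable μ')
    (h : M.geF μ μ') : ∀ w, M.Cw w (μ'.wm w ∪ μ.wm w) = μ'.wm w := by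
  intro w
  have hBsub : M.Cw w (μ'.wm w ∪ μ.wm w) ⊆ μ'.wm w := by
    intro g hg
    by_contra hgn
    have hgμ : g ∈ μ.wm w := by
      rcases Finset.mem_union.mp (bestIn_subset _ hg) with hh | hh
      · exact absurd hh hgn
      · exact hh
    have h1 : g ∈ M.Cw w (insert g (μ'.wm w)) :=
      hsub.2 w _ (μ'.wm w) g Finset.subset_union_left hg
    have hwμ : w ∈ μ.fm g := (μ.consistent g w).mpr hgμ
    have h2 : w ∈ M.Cf g (insert w (μ'.fm g)) :=
      bestIn_chosen_of_order (hsub.1 g) (h g) hwμ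
    have hwn : w ∉ μ'.fm g := fun hc => hgn ((μ'.consistent g w).mp hc)
    exact hμ'.2 g w ⟨hwn, h2, h1⟩
  have hIIA := bestIn_IIA (u := M.uW w) (M.injW w) hBsub Finset.subset_union_left
  exact hIIA.symm.trans (hμ'.1.2 w)

/-- The master avoidance lemma: if `(f, w)` are mutually chosen on top of `μ'`
(in the original market), then `w` is not deleted for `f` and `f` is not deleted
for `w` in the reduction procedure. -/
lemma avoid_main (hsub : M.SubstAll) {μ μt μ' : Matching F W}
    (hμ : M.Stable μ) (hμt : M.Stable μt)
    (hFt : ∀ f, M.Cf f (μ'.fm f ∪ μt.fm f) = μ'.fm f)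
    (hWμ : ∀ w, M.Cw w (μ'.wm w ∪ μ.wm w) = μ'.wm w)
    {f : F} {w : W} (hbf : w ∈ M.Cf f (insert w (μ'.fm f)))
    (hbw : f ∈ M.Cw w (insert f (μ'.wm w))) :
    w ∉ M.Dall μ μt f ∧ f ∉ M.Eall μ μt w := by
  have hfμw : f ∈ M.Cw w (insert f (μ.wm w)) :=
    bestIn_PIT (M.injW w) (hsub.2 w) (hWμ w) hbw
  have hwμtf : w ∈ M.Cf f (insert w (μt.fm f)) :=
    bestIn_PIT (M.injF f) (hsub.1 f) (hFt f) hbf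
  have hD1 : w ∉ M.D1 μ f := by
    rintro ⟨W', ⟨hW', _⟩, hwW', hwn⟩
    have hmem : w ∈ M.Cf f (W' ∪ μ.fm f) := by rw [hW']; exact hwW'
    have h1 : w ∈ M.Cf f (insert w (μ.fm f)) :=
      hsub.1 f _ (μ.fm f) w Finset.subset_union_right hmem
    exact hμ.2 f w ⟨hwn, h1, hfμw⟩
  have hD2 : w ∉ M.D2 μt f := by
    rintro ⟨W', ⟨hW', _⟩, hwW', hwn⟩
    have h1 : M.Cf f (insert w (μt.fm f)) = μt.fm f := bestIn_rej (M.injF f) hW' hwW'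
    rw [h1] at hwμtf
    exact hwn hwμtf
  have hE1 : f ∉ M.E1 μt w := by
    rintro ⟨F', ⟨hF', _⟩, hfF', hfn⟩
    have hmem : f ∈ M.Cw w (F' ∪ μt.wm w) := by rw [hF']; exact hfF'
    have h1 : f ∈ M.Cw w (insert f (μt.wm w)) :=
      hsub.2 w _ (μt.wm w) f Finset.subset_union_right hmem
    have hwn : w ∉ μt.fm f := fun hc => hfn ((μt.consistent f w).mp hc)
    exact hμt.2 f w ⟨hwn, hwμtf, h1⟩
  have hE2 : f ∉ M.E2 μ w := by
    rintro ⟨F', ⟨hF', _⟩, hfF', hfn⟩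
    have h1 : M.Cw w (insert f (μ.wm w)) = μ.wm w := bestIn_rej (M.injW w) hF' hfF'
    rw [h1] at hfμw
    exact hfn hfμw
  have haccw : M.uW w ∅ < M.uW w ({f} : Finset F) := (bestIn_single (hsub.2 w) hbw).2
  have haccf : M.uF f ∅ < M.uF f ({w} : Finset W) := (bestIn_single (hsub.1 f) hbf).2
  constructor
  · rintro ((h | h) | h)
    · exact hD1 h
    · exact hD2 h
    · rcases h with h | (h | h)
      · exact h haccw
      · exact hE1 h
      · exact hE2 h
  · rintro ((h | h) | h)
    · exact hE1 h
    · exact hE2 h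
    · rcases h with h | (h | h)
      · exact h haccf
      · exact hD1 h
      · exact hD2 h

end Market

/-- Theorem 1. With substitutable preferences and stable matchings
`μ ⪰_F μ̃`, a matching `μ'` is stable under `P` with `μ ⪰_F μ' ⪰_F μ̃` if and only if
`μ'` is stable under the reduced profile `P^{μ,μ̃}`. -/
theorem reduced_stable_iff {F W : Type*} [DecidableEq F] [DecidableEq W]
    (M : Market F W) (hsub : M.SubstAll)
    (μ μt : Matching F W) (hμ : M.Stable μ) (hμt : M.Stable μt) (hge : M.geF μ μt)
    (μ' : Matching F W) :
    (M.Stable μ' ∧ M.geF μ μ' ∧ M.geF μ' μt) ↔ M.Stablered μ μt μ' := by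
  constructor
  · rintro ⟨hs', hFμ', hFt'⟩
    have hWμ : ∀ w, M.Cw w (μ'.wm w ∪ μ.wm w) = μ'.wm w := M.polarization hsub hs' hFμ'
    have hav : ∀ f w, w ∈ μ'.fm f → w ∉ M.Dall μ μt f ∧ f ∉ M.Eall μ μt w := by
      intro f w hw
      have hbf : w ∈ M.Cf f (insert w (μ'.fm f)) := by
        rw [Finset.insert_eq_self.mpr hw, hs'.1.1 f]; exact hw
      have hbw : f ∈ M.Cw w (insert f (μ'.wm w)) := by
        have hfw : f ∈ μ'.wm w := (μ'.consistent f w).mp hw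
        rw [Finset.insert_eq_self.mpr hfw, hs'.1.2 w]; exact hfw
      exact Market.avoid_main hsub hμ hμt hFt' hWμ hbf hbw
    have havD : ∀ f, ∀ x ∈ μ'.fm f, x ∉ M.Dall μ μt f := fun f x hx => (hav f x hx).1
    have havE : ∀ w, ∀ x ∈ μ'.wm w, x ∉ M.Eall μ μt w := fun w x hx =>
      (hav x w ((μ'.consistent x w).mpr hx)).2
    constructor
    · constructor
      · intro f
        rw [Market.Cfred_filter, Finset.filter_eq_self.mpr (havD f)]
        exact hs'.1.1 f
      · intro w
        rw [Market.Cwred_filter, Finset.filter_eq_self.mpr (havE w)]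
        exact hs'.1.2 w
    · rintro f w ⟨hwn, hbf, hbw⟩
      rw [Market.Cfred_filter, Finset.filter_insert] at hbf
      rw [Market.Cwred_filter, Finset.filter_insert] at hbw
      by_cases hwD : w ∈ M.Dall μ μt f
      · rw [if_neg (not_not_intro hwD), Finset.filter_eq_self.mpr (havD f), hs'.1.1 f] at hbf
        exact hwn hbf
      · by_cases hfE : f ∈ M.Eall μ μt w
        · rw [if_neg (not_not_intro hfE), Finset.filter_eq_self.mpr (havE w), hs'.1.2 w] at hbw
          exact hwn ((μ'.consistent f w).mpr hbw)
        · rw [if_pos hwD, Finset.filter_eq_self.mpr (havD f)] at hbf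
          rw [if_pos hfE, Finset.filter_eq_self.mpr (havE w)] at hbw
          exact hs'.2 f w ⟨hwn, hbf, hbw⟩
  · rintro ⟨⟨hIRf, hIRw⟩, hnb⟩
    -- individual rationality of `μ'` and avoidance of deleted partners
    have hAf : ∀ f, (∀ x ∈ μ'.fm f, x ∉ M.Dall μ μt f) ∧ M.Cf f (μ'.fm f) = μ'.fm f := by
      intro f
      have h := hIRf f
      rw [Market.Cfred_filter] at h
      have hsub1 : μ'.fm f ⊆ (μ'.fm f).filter (fun x => x ∉ M.Dall μ μt f) := by
        conv_lhs => rw [← h]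
        exact bestIn_subset _
      have hfe : (μ'.fm f).filter (fun x => x ∉ M.Dall μ μt f) = μ'.fm f :=
        Finset.Subset.antisymm (Finset.filter_subset _ _) hsub1
      refine ⟨fun x hx => (Finset.mem_filter.mp (hsub1 hx)).2, ?_⟩
      rw [hfe] at h; exact h
    have hAw : ∀ w, (∀ x ∈ μ'.wm w, x ∉ M.Eall μ μt w) ∧ M.Cw w (μ'.wm w) = μ'.wm w := by
      intro w
      have h := hIRw w
      rw [Market.Cwred_filter] at h
      have hsub1 : μ'.wm w ⊆ (μ'.wm w).filter (fun x => x ∉ M.Eall μ μt w) := by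
        conv_lhs => rw [← h]
        exact bestIn_subset _
      have hfe : (μ'.wm w).filter (fun x => x ∉ M.Eall μ μt w) = μ'.wm w :=
        Finset.Subset.antisymm (Finset.filter_subset _ _) hsub1
      refine ⟨fun x hx => (Finset.mem_filter.mp (hsub1 hx)).2, ?_⟩
      rw [hfe] at h; exact h
    have hIR' : M.IR μ' := ⟨fun f => (hAf f).2, fun w => (hAw w).2⟩
    -- `μ` and `μt` themselves survive the reduction
    have hWtμ : ∀ w, M.Cw w (μt.wm w ∪ μ.wm w) = μt.wm w := M.polarization hsub hμt hge
    have hsurvμ : ∀ f w, w ∈ μ.fm f → w ∉ M.Dall μ μt f ∧ f ∉ M.Eall μ μt w := by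
      intro f w hw
      have hbf : w ∈ M.Cf f (insert w (μ.fm f)) := by
        rw [Finset.insert_eq_self.mpr hw, hμ.1.1 f]; exact hw
      have hbw : f ∈ M.Cw w (insert f (μ.wm w)) := by
        have hfw := (μ.consistent f w).mp hw
        rw [Finset.insert_eq_self.mpr hfw, hμ.1.2 w]; exact hfw
      exact Market.avoid_main hsub hμ hμt (μ' := μ) hge
        (fun v => by rw [Finset.union_self]; exact hμ.1.2 v) hbf hbw
    have hsurvμt : ∀ f w, w ∈ μt.fm f → w ∉ M.Dall μ μt f ∧ f ∉ M.Eall μ μt w := by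
      intro f w hw
      have hbf : w ∈ M.Cf f (insert w (μt.fm f)) := by
        rw [Finset.insert_eq_self.mpr hw, hμt.1.1 f]; exact hw
      have hbw : f ∈ M.Cw w (insert f (μt.wm w)) := by
        have hfw := (μt.consistent f w).mp hw
        rw [Finset.insert_eq_self.mpr hfw, hμt.1.2 w]; exact hfw
      exact Market.avoid_main hsub hμ hμt (μ' := μt)
        (fun g => by rw [Finset.union_self]; exact hμt.1.1 g) hWtμ hbf hbw
    -- a blocking pair with no deleted member yields a reduced blocking pair
    have hblockred : ∀ f w, w ∉ μ'.fm f → w ∉ M.Dall μ μt f → f ∉ M.Eall μ μt w →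
        w ∈ M.Cf f (insert w (μ'.fm f)) → f ∈ M.Cw w (insert f (μ'.wm w)) → False := by
      intro f w hwn hwD hfE hbf hbw
      have e1 : (insert w (μ'.fm f)).filter (fun x => x ∉ M.Dall μ μt f)
          = insert w (μ'.fm f) :=
        Finset.filter_eq_self.mpr (by
          intro x hx
          rcases Finset.mem_insert.mp hx with rfl | hx
          · exact hwD
          · exact (hAf f).1 x hx)
      have e2 : (insert f (μ'.wm w)).filter (fun x => x ∉ M.Eall μ μt w)
          = insert f (μ'.wm w) :=
        Finset.filter_eq_self.mpr (by
          intro x hx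
          rcases Finset.mem_insert.mp hx with rfl | hx
          · exact hfE
          · exact (hAw w).1 x hx)
      exact hnb f w ⟨hwn, by rw [Market.Cfred_filter, e1]; exact hbf,
        by rw [Market.Cwred_filter, e2]; exact hbw⟩
    -- `μ ⪰_F μ'`
    have hFμ' : M.geF μ μ' := by
      intro f
      have hBsub : M.Cf f (μ.fm f ∪ μ'.fm f) ⊆ μ.fm f := by
        intro w hw
        by_contra hwn
        have hwμ' : w ∈ μ'.fm f := (Finset.mem_union.mp (bestIn_subset _ hw)).resolve_left hwn
        have h1 : w ∈ M.Cf f (insert w (μ.fm f)) :=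
          hsub.1 f _ (μ.fm f) w Finset.subset_union_left hw
        have hgen := bestIn_gen (u := M.uF f) (A := {T | M.uF f ∅ < M.uF f T})
          (M.injF f) (X := μ.fm f) (x := w)
        have hD1 : w ∈ M.D1 μ f :=
          ⟨M.Cf f (insert w (μ.fm f)), ⟨hgen, fun hc => hwn (hc ▸ h1)⟩, h1, hwn⟩
        exact (hAf f).1 w hwμ' (Or.inl (Or.inl hD1))
      have hIIA := bestIn_IIA (u := M.uF f) (M.injF f) hBsub Finset.subset_union_left
      exact hIIA.symm.trans (hμ.1.1 f)
    -- `μt ⪰_W μ'`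
    have hWt' : ∀ w, M.Cw w (μt.wm w ∪ μ'.wm w) = μt.wm w := by
      intro w
      have hBsub : M.Cw w (μt.wm w ∪ μ'.wm w) ⊆ μt.wm w := by
        intro g hg
        by_contra hgn
        have hgμ' : g ∈ μ'.wm w := (Finset.mem_union.mp (bestIn_subset _ hg)).resolve_left hgn
        have h1 : g ∈ M.Cw w (insert g (μt.wm w)) :=
          hsub.2 w _ (μt.wm w) g Finset.subset_union_left hg
        have hgen := bestIn_gen (u := M.uW w) (A := {T | M.uW w ∅ < M.uW w T})
          (M.injW w) (X := μt.wm w) (x := g)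
        have hE1 : g ∈ M.E1 μt w :=
          ⟨M.Cw w (insert g (μt.wm w)), ⟨hgen, fun hc => hgn (hc ▸ h1)⟩, h1, hgn⟩
        exact (hAw w).1 g hgμ' (Or.inl (Or.inl hE1))
      have hIIA := bestIn_IIA (u := M.uW w) (M.injW w) hBsub Finset.subset_union_left
      exact hIIA.symm.trans (hμt.1.2 w)
    -- `μ' ⪰_F μt`
    have hFt' : M.geF μ' μt := by
      intro f
      have hBsub : M.Cf f (μ'.fm f ∪ μt.fm f) ⊆ μ'.fm f := by
        intro w hw
        by_contra hwn
        have hwμt : w ∈ μt.fm f := (Finset.mem_union.mp (bestIn_subset _ hw)).resolve_left hwn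
        have hbf : w ∈ M.Cf f (insert w (μ'.fm f)) :=
          hsub.1 f _ (μ'.fm f) w Finset.subset_union_left hw
        have hfμtw : f ∈ μt.wm w := (μt.consistent f w).mp hwμt
        have hbw : f ∈ M.Cw w (insert f (μ'.wm w)) :=
          bestIn_chosen_of_order (hsub.2 w) (hWt' w) hfμtw
        exact hblockred f w hwn (hsurvμt f w hwμt).1 (hsurvμt f w hwμt).2 hbf hbw
      have hIIA := bestIn_IIA (u := M.uF f) (M.injF f) hBsub Finset.subset_union_left
      exact hIIA.symm.trans ((hAf f).2)
    -- `μ' ⪰_W μ`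
    have hWμ' : ∀ w, M.Cw w (μ'.wm w ∪ μ.wm w) = μ'.wm w := by
      intro w
      have hBsub : M.Cw w (μ'.wm w ∪ μ.wm w) ⊆ μ'.wm w := by
        intro g hg
        by_contra hgn
        have hgμ : g ∈ μ.wm w := (Finset.mem_union.mp (bestIn_subset _ hg)).resolve_left hgn
        have hbw : g ∈ M.Cw w (insert g (μ'.wm w)) :=
          hsub.2 w _ (μ'.wm w) g Finset.subset_union_left hg
        have hwμf : w ∈ μ.fm g := (μ.consistent g w).mpr hgμ
        have hbf : w ∈ M.Cf g (insert w (μ'.fm g)) :=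
          bestIn_chosen_of_order (hsub.1 g) (hFμ' g) hwμf
        have hwn' : w ∉ μ'.fm g := fun hc => hgn ((μ'.consistent g w).mp hc)
        exact hblockred g w hwn' (hsurvμ g w hwμf).1 (hsurvμ g w hwμf).2 hbf hbw
      have hIIA := bestIn_IIA (u := M.uW w) (M.injW w) hBsub Finset.subset_union_left
      exact hIIA.symm.trans ((hAw w).2)
    refine ⟨⟨hIR', ?_⟩, hFμ', hFt'⟩
    rintro f w ⟨hwn, hbf, hbw⟩
    obtain ⟨hwD, hfE⟩ := Market.avoid_main hsub hμ hμt hFt' hWμ' hbf hbw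
    exact hblockred f w hwn hwD hfE hbf hbw
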